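/- arXiv:2506.13235 — 6 statements merged into one kernel-verified Lean document; each statement's English description precedes it below -/
import Mathlib

section
/- Let G be a group generated by a finite set S, let p > q ≥ 1 be real numbers, and let f : G → ℝ be a finitely supported function. Set v = p/q and h = |f|^v. Then the ℓ^q norm of the gradient of h satisfies ‖∇h‖_q ≤ 2^(1/q) · |S|^((p−q)/(pq)) · v · ‖f‖_p^((p−q)/q) · ‖∇f‖_p, where ∇f(g,s) = f(g) − f(gs) for g ∈ G, s ∈ S, ‖f‖_p^p = Σ_g |f(g)|^p and ‖∇f‖_p^p = Σ_{g∈G, s∈S} |f(g)−f(gs)|^p. -/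
/-!
Write `v = p / q`. By the mean value theorem (here: Bernoulli's inequality),
`| |a|^v - |b|^v | ≤ v · max(|a|,|b|)^(v-1) · |a - b|` for every edge `(g, gs)`. Raising to the
power `q` and applying Hölder's inequality with `1/q = (p-q)/(pq) + 1/p` over the edges bounds
`‖∇h‖_q^q` by `v^q (Σ max(|f g|,|f(gs)|)^p)^((p-q)/p) ‖∇f‖_p^q`. Finally
`max^p ≤ |f g|^p + |f(gs)|^p`, and right translation by `s` preserves `‖f‖_p`, so the middle sum
is at most `2 |S| ‖f‖_p^p`.
-/

open Real Finset

lemma rpow_sub_rpow_le_of_one_le {a b v : ℝ} (hb : 0 ≤ b) (hba : b ≤ a) (hv : 1 ≤ v) :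
    a ^ v - b ^ v ≤ v * a ^ (v - 1) * (a - b) := by
  obtain rfl | ha := (hb.trans hba).eq_or_lt
  · simp [le_antisymm hba hb, zero_rpow (by positivity : v ≠ 0)]
  -- Bernoulli's inequality for `b / a = 1 + (b / a - 1)`, scaled by `a ^ v`.
  have bernoulli : 1 + v * (b / a - 1) ≤ (b / a) ^ v := by
    simpa using one_add_mul_self_le_rpow_one_add (s := b / a - 1)
      (by linarith [div_nonneg hb ha.le]) hv
  have scaled := mul_le_mul_of_nonneg_right bernoulli (rpow_pos_of_pos ha v).le
  rw [div_rpow hb ha.le, div_mul_cancel₀ _ (rpow_pos_of_pos ha v).ne'] at scaled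
  have hsplit : (1 + v * (b / a - 1)) * a ^ v = a ^ v + v * (a ^ v / a) * (b - a) := by
    field_simp
  rw [rpow_sub ha, rpow_one]
  linarith

lemma abs_abs_rpow_sub_abs_rpow_le {v : ℝ} (hv : 1 ≤ v) (a b : ℝ) :
    |(|a| ^ v) - (|b| ^ v)| ≤ v * max |a| |b| ^ (v - 1) * |a - b| := by
  wlog h : |b| ≤ |a| generalizing a b
  · simpa only [abs_sub_comm, max_comm] using this b a (le_of_not_ge h)
  rw [max_eq_left h, abs_of_nonneg (sub_nonneg.2 (rpow_le_rpow (abs_nonneg b) h (by linarith)))]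
  calc |a| ^ v - |b| ^ v ≤ v * |a| ^ (v - 1) * (|a| - |b|) :=
        rpow_sub_rpow_le_of_one_le (abs_nonneg b) h hv
    _ ≤ v * |a| ^ (v - 1) * |a - b| := by gcongr; exact abs_sub_abs_le_abs_sub a b

lemma max_rpow_le_rpow_add_rpow {x y p : ℝ} (hx : 0 ≤ x) (hy : 0 ≤ y) :
    max x y ^ p ≤ x ^ p + y ^ p := by
  rcases max_cases x y with ⟨h, -⟩ | ⟨h, -⟩ <;> rw [h]
  · exact le_add_of_nonneg_right (by positivity)
  · exact le_add_of_nonneg_left (by positivity)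

lemma sum_abs_rpow_sub_abs_rpow_rpow_le {ι : Type*} (s : Finset ι) (a b : ι → ℝ) {p q : ℝ}
    (hq : 0 < q) (hqp : q < p) :
    (∑ i ∈ s, |(|a i| ^ (p / q)) - (|b i| ^ (p / q))| ^ q) ^ (1 / q)
      ≤ p / q * (∑ i ∈ s, (|a i| ^ p + |b i| ^ p)) ^ ((p - q) / (p * q)) *
          (∑ i ∈ s, |a i - b i| ^ p) ^ (1 / p) := by
  have hp : 0 < p := hq.trans hqp
  set e := (p - q) / (p * q)
  set M := fun i ↦ max |a i| |b i|
  have hpq : 0 < p - q := by linarith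
  have hexp : (p - q) / q * e⁻¹ = p := by
    simp only [e]
    field_simp
  have hM (i : ι) : 0 ≤ M i := (abs_nonneg _).trans (le_max_left _ _)
  have pointwise (i : ι) : |(|a i| ^ (p / q)) - (|b i| ^ (p / q))| ^ q
      ≤ (p / q) ^ q * (M i ^ ((p - q) / q) * |a i - b i|) ^ q := by
    have hv : p / q - 1 = (p - q) / q := by field_simp
    have := abs_abs_rpow_sub_abs_rpow_le ((one_le_div hq).2 hqp.le) (a i) (b i)
    rw [hv] at this
    rw [← mul_rpow (by positivity) (by positivity), ← mul_assoc]
    exact rpow_le_rpow (abs_nonneg _) this hq.le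
  -- Hölder with `1 / q = e + 1 / p`.
  have holder : ∑ i ∈ s, (M i ^ ((p - q) / q) * |a i - b i|) ^ q
      ≤ (∑ i ∈ s, (M i ^ ((p - q) / q)) ^ e⁻¹) ^ (q / e⁻¹) *
          (∑ i ∈ s, |a i - b i| ^ p) ^ (q / p) := by
    refine Lr_rpow_le_Lp_mul_Lq_of_nonneg s ⟨?_, ?_, hp⟩ (fun i _ ↦ by positivity)
      (fun i _ ↦ by positivity)
    · simp only [e, inv_inv]
      field_simp
      ring
    · positivity
  have max_sum :
      ∑ i ∈ s, (M i ^ ((p - q) / q)) ^ e⁻¹ ≤ ∑ i ∈ s, (|a i| ^ p + |b i| ^ p) := by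
    refine sum_le_sum fun i _ ↦ ?_
    rw [← rpow_mul (hM i), hexp]
    exact max_rpow_le_rpow_add_rpow (abs_nonneg (a i)) (abs_nonneg (b i))
  calc (∑ i ∈ s, |(|a i| ^ (p / q)) - (|b i| ^ (p / q))| ^ q) ^ (1 / q)
      ≤ ((p / q) ^ q * ((∑ i ∈ s, (|a i| ^ p + |b i| ^ p)) ^ (q / e⁻¹) *
          (∑ i ∈ s, |a i - b i| ^ p) ^ (q / p))) ^ (1 / q) := by
        gcongr ?_ ^ _
        calc _ ≤ ∑ i ∈ s, (p / q) ^ q * (M i ^ ((p - q) / q) * |a i - b i|) ^ q :=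
              sum_le_sum fun i _ ↦ pointwise i
          _ ≤ _ := by
              rw [← mul_sum]
              gcongr
              exact holder.trans (by gcongr)
    _ = _ := by
        have h1 : q / e⁻¹ * (1 / q) = e := by field_simp
        have h2 : q / p * (1 / q) = 1 / p := by field_simp
        rw [mul_rpow (by positivity) (by positivity), mul_rpow (by positivity) (by positivity),
          ← rpow_mul (by positivity), ← rpow_mul (by positivity), ← rpow_mul (by positivity),
          mul_one_div_cancel hq.ne', rpow_one, h1, h2, mul_assoc]

lemma two_mul_mul_rpow_le {c N p q : ℝ} (hc : 0 ≤ c) (hN : 0 ≤ N) (hq : 0 < q) (hqp : q < p) :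
    (2 * c * N) ^ ((p - q) / (p * q))
      ≤ 2 ^ (1 / q) * c ^ ((p - q) / (p * q)) * (N ^ (1 / p)) ^ ((p - q) / q) := by
  have hp : 0 < p := hq.trans hqp
  have hexp : (p - q) / (p * q) ≤ 1 / q := by
    rw [div_le_div_iff₀ (by positivity) hq]
    nlinarith
  have hN' : (N ^ (1 / p)) ^ ((p - q) / q) = N ^ ((p - q) / (p * q)) := by
    rw [← rpow_mul hN]
    field_simp
  rw [mul_rpow (by positivity) hN, mul_rpow zero_le_two hc, hN']
  gcongr ?_ * _ * _
  exact rpow_le_rpow_of_exponent_le one_le_two hexp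

open scoped Pointwise in
lemma exists_finset_forall_notMem_eq_zero_and_mul_eq_zero {G M : Type*} [Group G] [Zero M]
    {f : G → M} (hf : (Function.support f).Finite) (S : Finset G) :
    ∃ B : Finset G, ∀ g ∉ B, f g = 0 ∧ ∀ s ∈ S, f (g * s) = 0 := by
  classical
  refine ⟨hf.toFinset ∪ hf.toFinset * S⁻¹, fun g hg ↦ ⟨?_, fun s hs ↦ ?_⟩⟩ <;>
    by_contra h <;> refine hg (mem_union.2 ?_)
  · exact .inl (hf.mem_toFinset.2 h)
  · exact .inr (by simpa using mul_mem_mul (hf.mem_toFinset.2 h) (inv_mem_inv hs))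

lemma sum_product_abs_rpow_add_abs_mul_rpow {G : Type*} [Group G] {f : G → ℝ} {B S : Finset G}
    {p : ℝ} (hp : p ≠ 0) (hB : ∀ g ∉ B, f g = 0 ∧ ∀ s ∈ S, f (g * s) = 0) :
    ∑ x ∈ B ×ˢ S, (|f x.1| ^ p + |f (x.1 * x.2)| ^ p) = 2 * S.card * ∑' g, |f g| ^ p := by
  have hN : ∑ g ∈ B, |f g| ^ p = ∑' g, |f g| ^ p :=
    (tsum_eq_sum fun g hg ↦ by simp [(hB g hg).1, zero_rpow hp]).symm
  have hNs (s : G) (hs : s ∈ S) : ∑ g ∈ B, |f (g * s)| ^ p = ∑' g, |f g| ^ p := by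
    calc ∑ g ∈ B, |f (g * s)| ^ p = ∑' g, |f (g * s)| ^ p :=
          (tsum_eq_sum fun g hg ↦ by simp [(hB g hg).2 s hs, zero_rpow hp]).symm
      _ = ∑' g, |f g| ^ p := (Equiv.mulRight s).tsum_eq fun g ↦ |f g| ^ p
  rw [sum_add_distrib, sum_product, sum_product_right, sum_congr rfl hNs]
  simp only [sum_const, nsmul_eq_mul, ← mul_sum, hN]
  ring

theorem stmt_1_general (G : Type*) [Group G] (S : Finset G)
    (p q : ℝ) (hq : 1 ≤ q) (hpq : q < p)
    (f : G → ℝ) (hf : (Function.support f).Finite) :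
    (∑' g : G, ∑ s ∈ S, |(|f g| ^ (p / q)) - (|f (g * s)| ^ (p / q))| ^ q) ^ (1 / q)
      ≤ 2 ^ (1 / q) * (S.card : ℝ) ^ ((p - q) / (p * q)) * (p / q) *
          ((∑' g : G, |f g| ^ p) ^ (1 / p)) ^ ((p - q) / q) *
          (∑' g : G, ∑ s ∈ S, |f g - f (g * s)| ^ p) ^ (1 / p) := by
  have hq0 : 0 < q := by linarith
  have hp0 : 0 < p := hq0.trans hpq
  obtain ⟨B, hB⟩ := exists_finset_forall_notMem_eq_zero_and_mul_eq_zero hf S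
  rw [tsum_eq_sum (s := B) fun g hg ↦ sum_eq_zero fun s hs ↦ by
      simp [(hB g hg).1, (hB g hg).2 s hs, zero_rpow hq0.ne'],
    tsum_eq_sum (s := B) fun g hg ↦ sum_eq_zero fun s hs ↦ by
      simp [(hB g hg).1, (hB g hg).2 s hs, zero_rpow hp0.ne'],
    ← sum_product', ← sum_product']
  refine (sum_abs_rpow_sub_abs_rpow_rpow_le (B ×ˢ S) (fun x ↦ f x.1) (fun x ↦ f (x.1 * x.2))
    hq0 hpq).trans ?_
  calc _ ≤ p / q * (2 ^ (1 / q) * (S.card : ℝ) ^ ((p - q) / (p * q)) *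
          ((∑' g, |f g| ^ p) ^ (1 / p)) ^ ((p - q) / q)) *
          (∑ x ∈ B ×ˢ S, |f x.1 - f (x.1 * x.2)| ^ p) ^ (1 / p) := by
        rw [sum_product_abs_rpow_add_abs_mul_rpow hp0.ne' hB]
        gcongr
        exact two_mul_mul_rpow_le (Nat.cast_nonneg _) (tsum_nonneg fun g ↦ by positivity) hq0 hpq
    _ = _ := by ring

/-- Let `G` be a group generated by a finite set `S`, let `p > q ≥ 1`, and let
`f : G → ℝ` be finitely supported. Set `v = p/q` and `h = |f|^v`. Then
`‖∇h‖_q ≤ 2^(1/q) · |S|^((p−q)/(pq)) · v · ‖f‖_p^((p−q)/q) · ‖∇f‖_p`, where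
`∇u(g,s) = u(g) − u(gs)`, `‖u‖_p = (Σ_g |u(g)|^p)^(1/p)` and
`‖∇u‖_p = (Σ_{g,s} |u(g) − u(gs)|^p)^(1/p)`. -/
theorem stmt_1 (G : Type*) [Group G] (S : Finset G)
    (hgen : Subgroup.closure (S : Set G) = ⊤)
    (p q : ℝ) (hq : 1 ≤ q) (hpq : q < p)
    (f : G → ℝ) (hf : (Function.support f).Finite) :
    (∑' g : G, ∑ s ∈ S, |(|f g| ^ (p / q)) - (|f (g * s)| ^ (p / q))| ^ q) ^ (1 / q)
      ≤ 2 ^ (1 / q) * (S.card : ℝ) ^ ((p - q) / (p * q)) * (p / q) *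
          ((∑' g : G, |f g| ^ p) ^ (1 / p)) ^ ((p - q) / q) *
          (∑' g : G, ∑ s ∈ S, |f g - f (g * s)| ^ p) ^ (1 / p) :=
  stmt_1_general G S p q hq hpq f hf
end

section
/- Let H be a group and K a proper subgroup of H. Then the lampshuffler group Shuffler(H) = FSym(H) ⋊ H contains a subgroup isomorphic to the wreath product FSym(S) ≀ K, where S is a set of coset representatives of H/K (so |S| = [H:K]). Explicitly, the set G = {(σ, h) ∈ Shuffler(H) : h ∈ K and σ(kS) = kS for all k ∈ K} is a subgroup of Shuffler(H) isomorphic to FSym(S) ≀ K. -/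
open Pointwise

/-- The group of finitely supported permutations of a set `X`, as a subgroup of
the full permutation group. -/
def fsym (X : Type*) : Subgroup (Equiv.Perm X) where
  carrier := {σ : Equiv.Perm X | {x : X | σ x ≠ x}.Finite}
  one_mem' := by simp
  mul_mem' := by
    intro a b ha hb
    refine Set.Finite.subset (ha.union hb) ?_
    intro x hx
    simp only [Set.mem_setOf_eq, Equiv.Perm.mul_apply] at hx
    by_contra hc
    simp only [Set.mem_union, Set.mem_setOf_eq, not_or, not_not] at hc
    rw [hc.2, hc.1] at hx
    exact hx rfl
  inv_mem' := by
    intro a ha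
    refine Set.Finite.subset ha ?_
    intro x hx
    simp only [Set.mem_setOf_eq] at hx ⊢
    intro h
    apply hx
    conv_lhs => rw [← h]
    exact Equiv.symm_apply_apply a x

theorem conj_mem_fsym {X : Type*} (c : Equiv.Perm X) {σ : Equiv.Perm X}
    (h : σ ∈ fsym X) : c * σ * c⁻¹ ∈ fsym X := by
  refine Set.Finite.subset (Set.Finite.image c h) ?_
  intro x hx
  simp only [Set.mem_setOf_eq, Equiv.Perm.mul_apply] at hx
  refine ⟨c⁻¹ x, ?_, by simp⟩
  simp only [Set.mem_setOf_eq]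
  intro hc
  apply hx
  rw [hc]
  simp

/-- The action of a group `H` on the permutations of `H`, by
`(h·σ)(x) = h σ(h⁻¹ x)`, i.e. conjugation by the left translation by `h`. -/
def permAct (H : Type*) [Group H] : H →* MulAut (Equiv.Perm H) :=
  MulAut.conj.comp (MulAction.toPermHom H H)

theorem permAct_apply {H : Type*} [Group H] (h : H) (σ : Equiv.Perm H) (x : H) :
    permAct H h σ x = h * σ (h⁻¹ * x) := rfl

theorem permAct_mem_fsym {H : Type*} [Group H] (h : H) {σ : Equiv.Perm H}
    (hσ : σ ∈ fsym H) : permAct H h σ ∈ fsym H :=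
  conj_mem_fsym _ hσ

/-- The "unrestricted" lampshuffler: the semidirect product of the full
permutation group of `H` with `H`. -/
abbrev BigShuffler (H : Type*) [Group H] := SemidirectProduct (Equiv.Perm H) H (permAct H)

/-- The lampshuffler group `Shuffler(H) = FSym(H) ⋊ H`, realised as the
subgroup of `BigShuffler H` whose permutation part is finitely supported. -/
def Shuffler (H : Type*) [Group H] : Subgroup (BigShuffler H) where
  carrier := {p | p.left ∈ fsym H}
  one_mem' := by
    simp only [Set.mem_setOf_eq, SemidirectProduct.one_left]
    exact one_mem _
  mul_mem' := by
    intro a b ha hb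
    simp only [Set.mem_setOf_eq, SemidirectProduct.mul_left] at *
    exact mul_mem ha (permAct_mem_fsym _ hb)
  inv_mem' := by
    intro a ha
    simp only [Set.mem_setOf_eq, SemidirectProduct.inv_left] at *
    exact permAct_mem_fsym _ (inv_mem ha)

/-- The restricted direct sum `⊕_K A`, as the subgroup of `K → A` of functions
with finite (multiplicative) support. -/
def finSuppFuns (K A : Type*) [Group A] : Subgroup (K → A) where
  carrier := {f | (Function.mulSupport f).Finite}
  one_mem' := by simp [Function.mulSupport_one]
  mul_mem' := by
    intro a b ha hb
    exact Set.Finite.subset (ha.union hb) (Function.mulSupport_mul a b)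
  inv_mem' := by
    intro a ha
    simpa [Function.mulSupport_inv] using ha

/-- The translation action of `K` on `K → A`: `(k·f)(x) = f(k⁻¹ x)`. -/
def wreathAct (A K : Type*) [Group A] [Group K] : K →* MulAut (K → A) where
  toFun k :=
    { toFun := fun f x => f (k⁻¹ * x)
      invFun := fun f x => f (k * x)
      left_inv := by intro f; funext x; simp [mul_assoc]
      right_inv := by intro f; funext x; simp [mul_assoc]
      map_mul' := by intro f g; rfl }
  map_one' := by
    ext f x
    simp
  map_mul' := by
    intro k₁ k₂
    ext f x
    simp [mul_assoc]

/-- The "unrestricted" wreath product `(K → A) ⋊ K`. -/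
abbrev BigWreath (A K : Type*) [Group A] [Group K] :=
  SemidirectProduct (K → A) K (wreathAct A K)

theorem wreathAct_mem_finSuppFuns {A K : Type*} [Group A] [Group K] (k : K)
    {f : K → A} (hf : f ∈ finSuppFuns K A) : wreathAct A K k f ∈ finSuppFuns K A := by
  refine Set.Finite.subset (Set.Finite.image (fun x => k * x) hf) ?_
  intro x hx
  exact ⟨k⁻¹ * x, hx, by simp⟩

/-- The (restricted) wreath product `A ≀ K = (⊕_K A) ⋊ K`, realised as the
subgroup of `BigWreath A K` whose function part has finite support. -/
def Wreath (A K : Type*) [Group A] [Group K] : Subgroup (BigWreath A K) where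
  carrier := {p | p.left ∈ finSuppFuns K A}
  one_mem' := by
    simp only [Set.mem_setOf_eq, SemidirectProduct.one_left]
    exact one_mem _
  mul_mem' := by
    intro a b ha hb
    simp only [Set.mem_setOf_eq, SemidirectProduct.mul_left] at *
    exact mul_mem ha (wreathAct_mem_finSuppFuns _ hb)
  inv_mem' := by
    intro a ha
    simp only [Set.mem_setOf_eq, SemidirectProduct.inv_left] at *
    exact wreathAct_mem_finSuppFuns _ (inv_mem ha)

/-!
The bijection `K × S ≃ H`, `(k, s) ↦ k * s`, turns the cosets `kS` into the fibres `{k} × S`.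
A family `f : K → Perm S` acts on `H` fibrewise, which gives an injective homomorphism
`(K → Perm S) →* Perm H`; it intertwines translation of the index by `K` with the action
`permAct` of `K ≤ H`, hence extends to an embedding `(K → FSym S) ⋊ K ↪ Perm H ⋊ H`.
Its image on `FSym(S) ≀ K` is `G`: a permutation preserving every fibre is fibrewise, and a
fibrewise permutation is finitely supported exactly when all its fibre permutations are and
only finitely many of them are nontrivial.
-/
theorem exists_prodShear_eq_of_forall_fst_eq {α β : Type*} {τ : Equiv.Perm (α × β)}
    (h : ∀ p, (τ p).1 = p.1) : ∃ f : α → Equiv.Perm β, Equiv.prodShear (Equiv.refl α) f = τ := by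
  have h_inv (p : α × β) : (τ.symm p).1 = p.1 := by
    simpa using (h (τ.symm p)).symm
  have h_mk (p : α × β) : (p.1, (τ p).2) = τ p := Prod.ext (h p).symm rfl
  have h_mk_inv (p : α × β) : (p.1, (τ.symm p).2) = τ.symm p := Prod.ext (h_inv p).symm rfl
  refine ⟨fun a =>
    ⟨fun b => (τ (a, b)).2, fun b => (τ.symm (a, b)).2, fun b => ?_, fun b => ?_⟩, ?_⟩
  · simpa using congrArg Prod.snd (congrArg τ.symm (h_mk (a, b)))
  · simpa using congrArg Prod.snd (congrArg τ (h_mk_inv (a, b)))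
  · ext p
    · exact (h p).symm
    · rfl

section FiberwisePerm

variable {α β X : Type*} (e : α × β ≃ X)

def fiberwisePerm : (α → Equiv.Perm β) →* Equiv.Perm X where
  toFun f := e.permCongr (Equiv.prodShear (Equiv.refl α) f)
  map_one' := by ext x; simp [Equiv.permCongr_apply, Equiv.prodShear]
  map_mul' f g := by ext x; simp [Equiv.permCongr_apply, Equiv.prodShear]

@[simp]
theorem fiberwisePerm_apply (f : α → Equiv.Perm β) (a : α) (b : β) :
    fiberwisePerm e f (e (a, b)) = e (a, f a b) := by
  simp [fiberwisePerm, Equiv.permCongr_apply, Equiv.prodShear]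

theorem fiberwisePerm_injective : Function.Injective (fiberwisePerm e) := by
  intro f g hfg
  ext a b
  simpa using Equiv.congr_fun hfg (e (a, b))

theorem setOf_fiberwisePerm_ne (f : α → Equiv.Perm β) :
    {x | fiberwisePerm e f x ≠ x} = e '' {p : α × β | f p.1 p.2 ≠ p.2} := by
  ext x
  obtain ⟨⟨a, b⟩, rfl⟩ := e.surjective x
  simp [e.injective.eq_iff]

theorem fiberwisePerm_mem_fsym_iff (f : α → Equiv.Perm β) :
    fiberwisePerm e f ∈ fsym X ↔ (∀ a, f a ∈ fsym β) ∧ (Function.mulSupport f).Finite := by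
  change {x | _ ≠ x}.Finite ↔ _
  rw [setOf_fiberwisePerm_ne, Set.finite_image_iff e.injective.injOn]
  constructor
  · intro h
    refine ⟨fun a => h.preimage (Prod.mk_right_injective a).injOn, (h.image Prod.fst).subset ?_⟩
    intro a ha
    obtain ⟨b, hb⟩ : ∃ b, f a b ≠ b := by
      by_contra! hc
      exact ha (Equiv.ext hc)
    exact ⟨(a, b), hb, rfl⟩
  · rintro ⟨hf, hsupp⟩
    refine (hsupp.biUnion fun a _ => (Set.finite_singleton a).prod (hf a)).subset ?_
    rintro ⟨a, b⟩ hab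
    refine Set.mem_biUnion (x := a) (fun ha => hab ?_) ⟨rfl, hab⟩
    simp [ha]

theorem mem_range_fiberwisePerm_iff (σ : Equiv.Perm X) :
    σ ∈ (fiberwisePerm e).range ↔
      ∀ a, σ '' Set.range (fun b => e (a, b)) = Set.range (fun b => e (a, b)) := by
  constructor
  · rintro ⟨f, rfl⟩ a
    rw [← Set.range_comp]
    have : fiberwisePerm e f ∘ (fun b => e (a, b)) = (fun b => e (a, b)) ∘ f a :=
      funext (fiberwisePerm_apply e f a)
    rw [this, (f a).surjective.range_comp]
  · intro h
    have h_fst (p : α × β) : (e.symm.permCongr σ p).1 = p.1 := by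
      obtain ⟨b, hb⟩ := (h p.1).subset ⟨e p, ⟨p.2, rfl⟩, rfl⟩
      simp [Equiv.permCongr_apply, ← hb]
    obtain ⟨f, hf⟩ := exists_prodShear_eq_of_forall_fst_eq h_fst
    refine ⟨f, ?_⟩
    change e.permCongr _ = σ
    rw [hf, ← Equiv.permCongr_symm, Equiv.apply_symm_apply]

end FiberwisePerm

section Lampshuffler

variable {H : Type*} [Group H] {K : Subgroup H} {S : Set H}
  (hS : Function.Bijective (fun p : K × S => (p.1 : H) * (p.2 : H)))

noncomputable def cosetEquiv : K × S ≃ H := Equiv.ofBijective _ hS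

theorem cosetEquiv_apply (k : K) (s : S) : cosetEquiv hS (k, s) = k * s := rfl

theorem smul_eq_range_cosetEquiv (k : K) :
    (k : H) • S = Set.range fun s => cosetEquiv hS (k, s) := by
  ext x
  simp [Set.mem_smul_set, cosetEquiv_apply]

theorem fiberwisePerm_cosetEquiv_translate (g : K) (f : K → Equiv.Perm S) :
    fiberwisePerm (cosetEquiv hS) (fun k => f (g⁻¹ * k)) =
      permAct H g (fiberwisePerm (cosetEquiv hS) f) := by
  ext x
  obtain ⟨⟨k, s⟩, rfl⟩ := (cosetEquiv hS).surjective x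
  have h_translate : (g : H)⁻¹ * cosetEquiv hS (k, s) = cosetEquiv hS (g⁻¹ * k, s) := by
    simp [cosetEquiv_apply, mul_assoc]
  rw [permAct_apply, h_translate, fiberwisePerm_apply, fiberwisePerm_apply]
  simp [cosetEquiv_apply, mul_assoc]

noncomputable def wreathToShuffler : BigWreath (fsym S) K →* BigShuffler H :=
  SemidirectProduct.map ((fiberwisePerm (cosetEquiv hS)).comp ((fsym S).subtype.compLeft K))
    K.subtype fun g => by
      ext f : 1
      exact fiberwisePerm_cosetEquiv_translate hS g fun k => f k

theorem wreathToShuffler_injective : Function.Injective (wreathToShuffler hS) := by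
  intro p q hpq
  have h_left := fiberwisePerm_injective _ (congrArg SemidirectProduct.left hpq)
  ext1
  · funext k
    exact Subtype.ext (congrFun h_left k)
  · exact Subtype.ext (congrArg SemidirectProduct.right hpq)

theorem mem_map_wreathToShuffler_iff (p : BigShuffler H) :
    p ∈ (Wreath (fsym S) K).map (wreathToShuffler hS) ↔
      p.left ∈ fsym H ∧ p.right ∈ K ∧ ∀ k : K, ⇑p.left '' ((k : H) • S) = (k : H) • S := by
  simp_rw [smul_eq_range_cosetEquiv hS, ← mem_range_fiberwisePerm_iff]
  constructor
  · rintro ⟨q, hq, rfl⟩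
    refine ⟨?_, q.right.2, ⟨_, rfl⟩⟩
    refine (fiberwisePerm_mem_fsym_iff _ _).2 ⟨fun k => (q.left k).2, hq.subset ?_⟩
    exact Function.mulSupport_comp_subset (fsym S).subtype.map_one _
  · rintro ⟨hfs, hK, f, hf⟩
    rw [← hf, fiberwisePerm_mem_fsym_iff] at hfs
    refine ⟨⟨fun k => ⟨f k, hfs.1 k⟩, ⟨p.right, hK⟩⟩,
      hfs.2.subset fun k hk h => hk (Subtype.ext h), ?_⟩
    ext1
    · exact hf
    · rfl

end Lampshuffler

open Pointwise in
theorem stmt_4_general (H : Type*) [Group H] (K : Subgroup H) (S : Set H)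
    (hS : Function.Bijective (fun p : K × S => (p.1 : H) * (p.2 : H))) :
    ∃ G : Subgroup (BigShuffler H), G ≤ Shuffler H ∧
      (∀ p : BigShuffler H, p ∈ G ↔ (p.left ∈ fsym H ∧ p.right ∈ K ∧
          ∀ k : K, ⇑p.left '' ((k : H) • S) = (k : H) • S)) ∧
      Nonempty (↥G ≃* ↥(Wreath ↥(fsym ↥S) ↥K)) :=
  ⟨(Wreath (fsym S) K).map (wreathToShuffler hS),
    fun p hp => ((mem_map_wreathToShuffler_iff hS p).1 hp).1,
    mem_map_wreathToShuffler_iff hS,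
    ⟨((Wreath (fsym S) K).equivMapOfInjective _ (wreathToShuffler_injective hS)).symm⟩⟩

open Pointwise in
/-- Let `K` be a proper subgroup of `H` and `S` a set of coset representatives
of `H/K` (so that `(k,s) ↦ k·s` is a bijection `K × S → H`). Then
`G = {(σ,h) ∈ Shuffler(H) : h ∈ K and σ(kS) = kS for all k ∈ K}` is a subgroup
of `Shuffler(H)` isomorphic to the wreath product `FSym(S) ≀ K`. -/
theorem stmt_4 (H : Type*) [Group H] (K : Subgroup H) (hK : K ≠ ⊤) (S : Set H)
    (hS : Function.Bijective (fun p : K × S => (p.1 : H) * (p.2 : H))) :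
    ∃ G : Subgroup (BigShuffler H), G ≤ Shuffler H ∧
      (∀ p : BigShuffler H, p ∈ G ↔ (p.left ∈ fsym H ∧ p.right ∈ K ∧
          ∀ k : K, ⇑p.left '' ((k : H) • S) = (k : H) • S)) ∧
      Nonempty (↥G ≃* ↥(Wreath ↥(fsym ↥S) ↥K)) :=
  stmt_4_general H K S hS
end

section
/- If a group H is not co-Hopfian, then the lampshuffler Shuffler(H) = FSym(H) ⋊ H is not co-Hopfian. Explicitly, given an injective non-surjective endomorphism ψ of H, the map (σ, g) ↦ (σ̄, ψ(g)), where σ̄(x) = ψ(σ(ψ⁻¹(x))) if x is in the image of ψ and σ̄(x) = x otherwise, is a well-defined injective non-surjective endomorphism of Shuffler(H). -/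
open Pointwise

/-!
The extension `σ ↦ σ̄` of an injective hom `ψ` to permutations is `Equiv.Perm.viaEmbeddingHom`,
an injective hom preserving finite support. It intertwines translation by `g` with translation by
`ψ g`, since `range ψ` and its complement are invariant under left multiplication by `ψ g`; hence
it combines with `ψ` into a hom of semidirect products, injective since both components are. Its
`H`-component lies in `range ψ`, so it misses `inr h` for every `h ∉ range ψ`.
-/

/-- The paper's `σ ↦ σ̄`. -/
noncomputable abbrev permExtend {G H : Type*} [Group G] [Group H] (ψ : G →* H)
    (hψ : Function.Injective ψ) : Equiv.Perm G →* Equiv.Perm H :=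
  Equiv.Perm.viaEmbeddingHom ⟨ψ, hψ⟩

theorem viaEmbedding_mem_fsym {α β : Type*} (ι : α ↪ β) {σ : Equiv.Perm α}
    (hσ : σ ∈ fsym α) : σ.viaEmbedding ι ∈ fsym β := by
  refine (hσ.image ι).subset fun x hx => ?_
  by_cases hr : x ∈ Set.range ι
  · obtain ⟨y, rfl⟩ := hr
    refine ⟨y, fun h => hx ?_, rfl⟩
    rw [Equiv.Perm.viaEmbedding_apply, h]
  · exact absurd (Equiv.Perm.viaEmbedding_apply_of_notMem σ ι x hr) hx

section

variable {G H : Type*} [Group G] [Group H] (ψ : G →* H) (hψ : Function.Injective ψ)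

theorem permExtend_comp_permAct (g : G) :
    (permExtend ψ hψ).comp (permAct G g).toMonoidHom
      = (permAct H (ψ g)).toMonoidHom.comp (permExtend ψ hψ) := by
  ext σ x
  simp only [MonoidHom.comp_apply, MulEquiv.coe_toMonoidHom, Equiv.Perm.viaEmbeddingHom_apply,
    permAct_apply]
  by_cases hx : x ∈ ψ.range
  · obtain ⟨y, rfl⟩ := hx
    have hy : (ψ g)⁻¹ * ψ y = ψ (g⁻¹ * y) := by rw [map_mul, map_inv]
    rw [hy]
    erw [Equiv.Perm.viaEmbedding_apply, Equiv.Perm.viaEmbedding_apply]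
    simp only [Function.Embedding.coeFn_mk, permAct_apply, map_mul]
  · have hx' : (ψ g)⁻¹ * x ∉ ψ.range := fun h =>
      hx ((Subgroup.mul_mem_cancel_left _ (inv_mem (ψ.mem_range.mpr ⟨g, rfl⟩))).mp h)
    rw [Equiv.Perm.viaEmbedding_apply_of_notMem _ _ _ hx,
      Equiv.Perm.viaEmbedding_apply_of_notMem _ _ _ hx', mul_inv_cancel_left]

noncomputable def bigShufflerMap : BigShuffler G →* BigShuffler H :=
  SemidirectProduct.map (permExtend ψ hψ) ψ (permExtend_comp_permAct ψ hψ)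

theorem bigShufflerMap_injective : Function.Injective (bigShufflerMap ψ hψ) :=
  fun _ _ h => SemidirectProduct.ext
    (Equiv.Perm.viaEmbeddingHom_injective _ (congrArg SemidirectProduct.left h))
    (hψ (congrArg SemidirectProduct.right h))

theorem bigShufflerMap_mem_shuffler {p : BigShuffler G} (hp : p ∈ Shuffler G) :
    bigShufflerMap ψ hψ p ∈ Shuffler H :=
  viaEmbedding_mem_fsym _ hp

noncomputable def shufflerMap : Shuffler G →* Shuffler H :=
  ((bigShufflerMap ψ hψ).comp (Shuffler G).subtype).codRestrict (Shuffler H)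
    fun p => bigShufflerMap_mem_shuffler ψ hψ p.2

theorem shufflerMap_injective : Function.Injective (shufflerMap ψ hψ) :=
  fun _ _ h => Subtype.ext (bigShufflerMap_injective ψ hψ (congrArg Subtype.val h))

theorem shufflerMap_right (p : Shuffler G) :
    (shufflerMap ψ hψ p : BigShuffler H).right = ψ (p : BigShuffler G).right :=
  rfl

theorem inr_mem_shuffler (h : H) : (SemidirectProduct.inr h : BigShuffler H) ∈ Shuffler H :=
  one_mem (fsym H)

theorem surjective_of_shufflerMap_surjective (hs : Function.Surjective (shufflerMap ψ hψ)) :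
    Function.Surjective ψ := by
  intro h
  obtain ⟨p, hp⟩ := hs ⟨_, inr_mem_shuffler h⟩
  exact ⟨(p : BigShuffler G).right, by
    rw [← shufflerMap_right ψ hψ, hp, SemidirectProduct.right_inr]⟩

end

/-- If a group `H` is not co-Hopfian, i.e. admits an injective non-surjective
endomorphism `ψ`, then the lampshuffler `Shuffler(H) = FSym(H) ⋊ H` is not
co-Hopfian: it admits an injective non-surjective endomorphism. -/
theorem stmt_6 (H : Type*) [Group H] (ψ : H →* H)
    (hinj : Function.Injective ψ) (hsurj : ¬ Function.Surjective ψ) :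
    ∃ φ : ↥(Shuffler H) →* ↥(Shuffler H),
      Function.Injective φ ∧ ¬ Function.Surjective φ :=
  ⟨shufflerMap ψ hinj, shufflerMap_injective ψ hinj,
    fun h => hsurj (surjective_of_shufflerMap_surjective ψ hinj h)⟩
end

section
/- For a nontrivial group H, the lampshuffler Shuffler(H) = FSym(H) ⋊ H is not perfect, i.e., its commutator subgroup is a proper subgroup. -/
/-!
The sign of a finitely supported permutation is invariant under conjugation by an arbitrary
permutation, in particular by the left translations through which `H` acts. Hence
`σ ⋊ h ↦ sign σ` is a homomorphism `Shuffler(H) → ℤˣ`; it kills every commutator but sends the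
transposition of two distinct points of `H` to `-1`.
-/

open Pointwise

namespace Equiv.Perm

variable {X : Type*}

theorem apply_mem_iff_of_moved_subset (σ : Perm X) {s : Set X} (hs : {x | σ x ≠ x} ⊆ s)
    (x : X) : σ x ∈ s ↔ x ∈ s := by
  by_cases hx : σ x = x
  · rw [hx]
  · exact iff_of_true (hs fun h => hx (σ.injective h)) (hs hx)

open scoped Classical in
noncomputable def fsymSign (σ : fsym X) : ℤˣ :=
  letI : Fintype {x // σ.1 x ≠ x} := Set.Finite.fintype σ.2
  sign (σ.1.subtypePerm (p := fun x => σ.1 x ≠ x) fun _ => σ.1.injective.ne_iff)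

theorem fsymSign_eq_sign {p : X → Prop} [DecidablePred p] [Fintype (Subtype p)]
    [DecidableEq (Subtype p)] (σ : fsym X) (f : Perm (Subtype p)) (hσ : σ.1 = ofSubtype f) :
    fsymSign σ = sign f := by
  classical
  obtain ⟨σ, hfin⟩ := σ
  subst hσ
  let : Fintype {x // ofSubtype f x ≠ x} := Set.Finite.fintype hfin
  refine sign_bij
    (fun x _ => ⟨x.1, by_contra fun hp => x.2 (ofSubtype_apply_of_not_mem f hp)⟩)
    (fun x _ _ => Subtype.ext (ofSubtype_apply_of_mem f _))
    (fun x y _ _ h => Subtype.ext (Subtype.mk.inj h)) fun y hy => ?_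
  have hy' : ofSubtype f y ≠ y := by simpa using fun h => hy (Subtype.ext h)
  exact ⟨⟨y, hy'⟩, fun h => hy' (congrArg Subtype.val h), rfl⟩

theorem fsymSign_mul (σ τ : fsym X) : fsymSign (σ * τ) = fsymSign σ * fsymSign τ := by
  classical
  set s := {x | σ.1 x ≠ x} ∪ {x | τ.1 x ≠ x}
  let : Fintype s := (σ.2.union τ.2).fintype
  have hσs := σ.1.apply_mem_iff_of_moved_subset (s := s) Set.subset_union_left
  have hτs := τ.1.apply_mem_iff_of_moved_subset (s := s) Set.subset_union_right
  have hσ : σ.1 = ofSubtype (σ.1.subtypePerm hσs) :=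
    (ofSubtype_subtypePerm hσs fun _ => Or.inl).symm
  have hτ : τ.1 = ofSubtype (τ.1.subtypePerm hτs) :=
    (ofSubtype_subtypePerm hτs fun _ => Or.inr).symm
  have hστ : (σ * τ).1 = ofSubtype (σ.1.subtypePerm hσs * τ.1.subtypePerm hτs) := by
    rw [Subgroup.coe_mul, map_mul, ← hσ, ← hτ]
  rw [fsymSign_eq_sign _ _ hσ, fsymSign_eq_sign _ _ hτ, fsymSign_eq_sign _ _ hστ, map_mul]

theorem fsymSign_conj (c : Perm X) (σ : fsym X) :
    fsymSign ⟨c * σ.1 * c⁻¹, conj_mem_fsym c σ.2⟩ = fsymSign σ := by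
  classical
  obtain ⟨σ, hσ⟩ := σ
  let : Fintype {x // σ x ≠ x} := hσ.fintype
  let : Fintype {x // (c * σ * c⁻¹) x ≠ x} := (conj_mem_fsym c hσ).fintype
  refine (sign_eq_sign_of_equiv
    (σ.subtypePerm (p := fun x => σ x ≠ x) fun _ => σ.injective.ne_iff)
    ((c * σ * c⁻¹).subtypePerm (p := fun x => (c * σ * c⁻¹) x ≠ x)
      fun _ => (c * σ * c⁻¹).injective.ne_iff)
    (c.subtypeEquiv fun x => by simp) fun x => ?_).symm
  apply Subtype.ext
  show c (σ x) = c (σ (c⁻¹ (c x)))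
  simp

theorem swap_mem_fsym [DecidableEq X] (a b : X) : swap a b ∈ fsym X :=
  finite_compl_fixedBy_swap

theorem fsymSign_swap [DecidableEq X] {a b : X} (hab : a ≠ b) :
    fsymSign ⟨swap a b, swap_mem_fsym a b⟩ = -1 := by
  let s : Finset X := {a, b}
  rw [fsymSign_eq_sign (p := (· ∈ s)) _ (swap ⟨a, by simp [s]⟩ ⟨b, by simp [s]⟩)
    (by simp)]
  exact sign_swap fun h => hab (congrArg Subtype.val h)

end Equiv.Perm

open Equiv.Perm

noncomputable def shufflerSign (H : Type*) [Group H] : Shuffler H →* ℤˣ :=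
  MonoidHom.mk' (fun p => fsymSign ⟨p.1.left, p.2⟩) fun p q => by
    show fsymSign (⟨p.1.left, p.2⟩ *
      ⟨permAct H p.1.right q.1.left, permAct_mem_fsym _ q.2⟩) = _
    rw [fsymSign_mul]
    congr 1
    exact fsymSign_conj (MulAction.toPermHom H H p.1.right) ⟨q.1.left, q.2⟩

theorem shufflerSign_inl (H : Type*) [Group H] (σ : fsym H) :
    shufflerSign H ⟨SemidirectProduct.inl σ.1, σ.2⟩ = fsymSign σ :=
  rfl

/-- For a nontrivial group `H`, the lampshuffler `Shuffler(H) = FSym(H) ⋊ H`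
is not perfect: its commutator subgroup is proper. -/
theorem stmt_7 (H : Type*) [Group H] [Nontrivial H] :
    commutator ↥(Shuffler H) ≠ ⊤ := by
  classical
  obtain ⟨a, b, hab⟩ := exists_pair_ne H
  intro htop
  have hswap : (⟨SemidirectProduct.inl (Equiv.swap a b), swap_mem_fsym a b⟩ : Shuffler H) ∈
      (shufflerSign H).ker :=
    Abelianization.commutator_subset_ker _ (htop ▸ Subgroup.mem_top _)
  rw [MonoidHom.mem_ker, shufflerSign_inl H ⟨_, swap_mem_fsym a b⟩, fsymSign_swap hab] at hswap
  exact absurd hswap (by decide)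
end

section
/- Let H be a group and F a finite group. The map from the lampdesigner (F ≀_H FSym(H)) ⋊ H to the lampjuggler FSym(H × F) ⋊ H sending ((f, σ), h) to (σ', h), where σ'(x, i) = (σ(x), f(x)·i), is an injective group homomorphism. In particular the lampdesigner embeds into the lampjuggler with |F| colors. -/
theorem permAct_inv_apply {H : Type*} [Group H] (h : H) (σ : Equiv.Perm H) (x : H) :
    (permAct H h σ)⁻¹ x = h * σ⁻¹ (h⁻¹ * x) := by
  rw [← map_inv]; rfl

def permOnFunAct (F H : Type*) [Group F] : Equiv.Perm H →* MulAut (H → F) where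
  toFun σ :=
    { toFun := fun f x => f (σ⁻¹ x)
      invFun := fun f x => f (σ x)
      left_inv := by intro f; funext x; simp
      right_inv := by intro f; funext x; simp
      map_mul' := by intro f g; rfl }
  map_one' := by ext f x; simp
  map_mul' := by intro σ τ; ext f x; simp

abbrev InnerDes (F H : Type*) [Group F] [Group H] :=
  SemidirectProduct (H → F) (Equiv.Perm H) (permOnFunAct F H)

def desAct (F H : Type*) [Group F] [Group H] : H →* MulAut (InnerDes F H) where
  toFun h :=
    { toFun := fun p => ⟨fun x => p.left (h⁻¹ * x), permAct H h p.right⟩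
      invFun := fun p => ⟨fun x => p.left (h * x), permAct H h⁻¹ p.right⟩
      left_inv := by
        intro p
        ext
        · dsimp only; simp
        · dsimp only; simp [← MulAut.mul_apply, ← map_mul]
      right_inv := by
        intro p
        ext
        · dsimp only; simp
        · dsimp only; simp [permAct_apply]
      map_mul' := by
        intro p q
        ext x
        · dsimp only
          simp only [SemidirectProduct.mul_left]
          dsimp [permOnFunAct]
          congr 1
          first
            | (rw [permAct_inv_apply, inv_mul_cancel_left])
            | (erw [← Equiv.Perm.inv_def, permAct_inv_apply, inv_mul_cancel_left])
            | simp [← Equiv.Perm.inv_def, permAct_inv_apply]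
        · dsimp only
          simp [SemidirectProduct.mul_right, map_mul] }
  map_one' := by
    ext p <;> simp
  map_mul' := by
    intro h₁ h₂
    ext p <;> simp [MulAut.mul_apply, mul_assoc, map_mul]

theorem permOnFunAct_mem {F H : Type*} [Group F] (σ : Equiv.Perm H) {f : H → F}
    (hf : f ∈ finSuppFuns H F) : permOnFunAct F H σ f ∈ finSuppFuns H F := by
  refine Set.Finite.subset (Set.Finite.image σ hf) ?_
  intro x hx
  exact ⟨σ⁻¹ x, hx, by simp⟩

theorem transl_mem {F H : Type*} [Group F] [Group H] (h : H) {f : H → F}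
    (hf : f ∈ finSuppFuns H F) : (fun x => f (h⁻¹ * x)) ∈ finSuppFuns H F := by
  refine Set.Finite.subset (Set.Finite.image (fun x => h * x) hf) ?_
  intro x hx
  exact ⟨h⁻¹ * x, hx, by simp⟩

abbrev BigDesigner (F H : Type*) [Group F] [Group H] :=
  SemidirectProduct (InnerDes F H) H (desAct F H)

/-- The lampdesigner `(F ≀_H FSym(H)) ⋊ H`, as the subgroup of the unrestricted
version whose function part and permutation part are finitely supported. -/
def Designer (F H : Type*) [Group F] [Group H] : Subgroup (BigDesigner F H) where
  carrier := {p | p.left.left ∈ finSuppFuns H F ∧ p.left.right ∈ fsym H}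
  one_mem' := by
    constructor
    · simp only [SemidirectProduct.one_left]; exact one_mem _
    · simp only [SemidirectProduct.one_left]; exact one_mem _
  mul_mem' := by
    intro a b ha hb
    simp only [Set.mem_setOf_eq, SemidirectProduct.mul_left,
      SemidirectProduct.mul_right] at *
    constructor
    · exact mul_mem ha.1 (permOnFunAct_mem _ (transl_mem _ hb.1))
    · exact mul_mem ha.2 (permAct_mem_fsym _ hb.2)
  inv_mem' := by
    intro a ha
    simp only [Set.mem_setOf_eq, SemidirectProduct.inv_left,
      SemidirectProduct.inv_right] at *
    constructor
    · exact transl_mem _ (permOnFunAct_mem _ (inv_mem ha.1))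
    · exact permAct_mem_fsym _ (inv_mem ha.2)

/-- The permutation of `H × F` induced by left translation by `h ∈ H` on the
first coordinate. -/
def jugPermHom (F H : Type*) [Group H] : H →* Equiv.Perm (H × F) where
  toFun h := Equiv.prodCongr (Equiv.mulLeft h) (Equiv.refl F)
  map_one' := by ext x <;> simp
  map_mul' := by intro a b; ext x <;> simp [mul_assoc]

/-- The action of `H` on `Perm (H × F)` by conjugation with translations. -/
def jugAct (F H : Type*) [Group H] : H →* MulAut (Equiv.Perm (H × F)) :=
  MulAut.conj.comp (jugPermHom F H)

abbrev BigJuggler (F H : Type*) [Group H] :=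
  SemidirectProduct (Equiv.Perm (H × F)) H (jugAct F H)

/-- The lampjuggler `FSym(H × F) ⋊ H`, as the subgroup of the unrestricted
version whose permutation part is finitely supported. -/
def Juggler (F H : Type*) [Group H] : Subgroup (BigJuggler F H) where
  carrier := {p | p.left ∈ fsym (H × F)}
  one_mem' := by
    simp only [Set.mem_setOf_eq, SemidirectProduct.one_left]; exact one_mem _
  mul_mem' := by
    intro a b ha hb
    simp only [Set.mem_setOf_eq, SemidirectProduct.mul_left] at *
    exact mul_mem ha (conj_mem_fsym _ hb)
  inv_mem' := by
    intro a ha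
    simp only [Set.mem_setOf_eq, SemidirectProduct.inv_left] at *
    exact conj_mem_fsym _ (inv_mem ha)


/-!
The map `(f, σ) ↦ σ'` is the standard embedding of the permutational wreath product
`F ≀_H Sym(H)` into `Sym(H × F)` given by `F` acting on itself by left multiplication: it is
a homomorphism, and it is injective because `σ'(x, 1) = (σ x, f (σ x))` recovers `σ` and `f`.
It intertwines the two `H`-actions, so it extends to the semidirect products by `H`. Finally,
`σ'` moves only points over the finitely many `x` moved by `σ` or with nontrivial colour, and
there are `|F|` of them over each `x`, so finitely supported data give a finitary permutation.
-/

theorem SemidirectProduct.map_injective {N₁ G₁ N₂ G₂ : Type*} [Group N₁] [Group G₁] [Group N₂]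
    [Group G₂] {φ₁ : G₁ →* MulAut N₁} {φ₂ : G₂ →* MulAut N₂} {fn : N₁ →* N₂} {fg : G₁ →* G₂}
    {h : ∀ g : G₁, fn.comp (φ₁ g).toMonoidHom = (φ₂ (fg g)).toMonoidHom.comp fn}
    (hn : Function.Injective fn) (hg : Function.Injective fg) :
    Function.Injective (SemidirectProduct.map fn fg h) := fun _ _ hxy =>
  SemidirectProduct.ext (hn congr(($hxy).left)) (hg congr(($hxy).right))

theorem prodShear_mem_fsym {α β : Type*} [Finite β] {σ : Equiv.Perm α}
    {g : α → Equiv.Perm β} (hσ : σ ∈ fsym α) (hg : (Function.mulSupport g).Finite) :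
    Equiv.prodShear σ g ∈ fsym (α × β) := by
  refine ((hσ.union hg).prod Set.finite_univ).subset fun ⟨x, i⟩ hx => ⟨?_, trivial⟩
  contrapose! hx
  simp only [Set.mem_union, Set.mem_ofPred_eq, Function.mem_mulSupport, not_or, not_not] at hx
  simp [hx.1, hx.2]

section LampShear

variable (F H : Type*) [Group F] [Group H]

-- The colour is read at `σ x` because `⟨f, σ⟩ = inl f * inr σ`: first move by `σ`, then recolour.
def lampShear : InnerDes F H →* Equiv.Perm (H × F) where
  toFun p := Equiv.prodShear p.right fun x => Equiv.mulLeft (p.left (p.right x))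
  map_one' := by ext x <;> simp
  map_mul' p q := by ext x <;> simp [permOnFunAct]

variable {F H}

@[simp]
theorem lampShear_apply (p : InnerDes F H) (x : H × F) :
    lampShear F H p x = (p.right x.1, p.left (p.right x.1) * x.2) := rfl

variable (F H)

theorem lampShear_injective : Function.Injective (lampShear F H) := by
  refine (injective_iff_map_eq_one _).2 fun p hp => ?_
  have hσ : p.right = 1 := Equiv.ext fun x => congr(($hp (x, 1)).1)
  have hf : p.left = 1 := funext fun x => by simpa [hσ] using congr(($hp (x, 1)).2)
  exact SemidirectProduct.ext hf hσ

theorem lampShear_comp_desAct (h : H) :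
    (lampShear F H).comp (desAct F H h).toMonoidHom =
      (jugAct F H h).toMonoidHom.comp (lampShear F H) := by
  ext p x <;> simp [desAct, jugAct, jugPermHom, MulAut.conj, permAct_apply]

variable {F H}

theorem lampShear_mem_fsym [Finite F] {p : InnerDes F H} (hf : p.left ∈ finSuppFuns H F)
    (hσ : p.right ∈ fsym H) : lampShear F H p ∈ fsym (H × F) :=
  prodShear_mem_fsym hσ <|
    (hf.subset (Function.mulSupport_comp_subset Equiv.mulLeft_one p.left)).preimage
      p.right.injective.injOn

end LampShear

/-- for a group `H` and a finite group `F`, the map from the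
lampdesigner `(F ≀_H FSym(H)) ⋊ H` to the lampjuggler `FSym(H × F) ⋊ H`
sending `((f, σ), h)` to `(σ', h)`, where `σ'` maps `(x, i)` to
`(σ(x), f(x)·i)` (written below, in Mathlib's semidirect-product convention,
as `σ'(x, i) = (σ(x), f(σ(x))·i)`), is an injective group homomorphism; in
particular the lampdesigner embeds into the lampjuggler with `|F|` colors. -/
theorem stmt_15 (F H : Type*) [Group F] [Group H] [Finite F] :
    ∃ Φ : BigDesigner F H →* BigJuggler F H,
      Function.Injective Φ ∧
      (∀ (f : H → F) (σ : Equiv.Perm H) (h : H),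
        Φ ⟨⟨f, σ⟩, h⟩
          = ⟨Equiv.prodShear σ (fun x => Equiv.mulLeft (f (σ x))), h⟩) ∧
      (∀ p, p ∈ Designer F H → Φ p ∈ Juggler F H) :=
  ⟨SemidirectProduct.map (lampShear F H) (MonoidHom.id H) (lampShear_comp_desAct F H),
    SemidirectProduct.map_injective (lampShear_injective F H) Function.injective_id,
    fun _ _ _ => rfl, fun _ ⟨hf, hσ⟩ => lampShear_mem_fsym hf hσ⟩
end

section
/- Let H be a group with a subgroup K and a set S of coset representatives for H/K (so H = ⊔_{k∈K} kS). For σ ∈ FSym(H) satisfying σ(kS) = kS for all k ∈ K, define f_σ : K → FSym(S) by f_σ(k) = (k⁻¹·σ)|_S, where (k⁻¹·σ)(x) = k⁻¹σ(kx). Then for all such σ, τ and all k₀ ∈ K: (a) f_σ has finite support as a function K → FSym(S); (b) f_{σ∘τ}(k) = f_σ(k) ∘ f_τ(k) for all k ∈ K; (c) f_{k₀·σ}(k) = f_σ(k₀⁻¹k) for all k ∈ K. -/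
open Pointwise

theorem inv_mul_apply_mul_mem_of_mapsTo {H : Type*} [Group H] {S : Set H}
    {σ : Equiv.Perm H} {g : H} (hσ : Set.MapsTo σ (g • S) (g • S)) {s : H} (hs : s ∈ S) :
    g⁻¹ * σ (g * s) ∈ S := by
  rw [← smul_eq_mul, ← Set.mem_smul_set_iff_inv_smul_mem]
  exact hσ (Set.smul_mem_smul_set hs)

theorem finite_setOf_exists_inv_mul_apply_mul_ne {H : Type*} [Group H] {K : Subgroup H}
    {S : Set H} (hS : Function.Injective (fun p : K × S => (p.1 : H) * (p.2 : H)))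
    {σ : Equiv.Perm H} (hσ : σ ∈ fsym H) :
    {k : K | ∃ s ∈ S, (k : H)⁻¹ * σ ((k : H) * s) ≠ s}.Finite := by
  -- `k⁻¹ σ(k s) ≠ s` puts `k s` in the support of `σ`, and `k s` determines `k`.
  have hsub : {k : K | ∃ s ∈ S, (k : H)⁻¹ * σ ((k : H) * s) ≠ s} ⊆
      Prod.fst '' ((fun p : K × S => (p.1 : H) * (p.2 : H)) ⁻¹' {x | σ x ≠ x}) := by
    rintro k ⟨s, hs, hne⟩
    refine ⟨(k, ⟨s, hs⟩), fun hfix => hne ?_, rfl⟩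
    rw [hfix, inv_mul_cancel_left]
  exact ((hσ.preimage hS.injOn).image _).subset hsub

theorem inv_mul_permAct_apply_mul {H : Type*} [Group H] (g h : H) (σ : Equiv.Perm H)
    (s : H) : g⁻¹ * permAct H h σ (g * s) = (h⁻¹ * g)⁻¹ * σ (h⁻¹ * g * s) := by
  rw [permAct_apply, mul_inv_rev, inv_inv, mul_assoc, mul_assoc]

open Pointwise in
theorem stmt_18_general (H : Type*) [Group H] (K : Subgroup H) (S : Set H)
    (hS : Function.Bijective (fun p : K × S => (p.1 : H) * (p.2 : H)))
    (σ τ : Equiv.Perm H) (hσfin : σ ∈ fsym H)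
    (hσblocks : ∀ k : K, ⇑σ '' ((k : H) • S) = (k : H) • S)
    (k₀ : K) :
    (∀ k : K, ∀ s ∈ S, (k : H)⁻¹ * σ ((k : H) * s) ∈ S) ∧
    {k : K | ∃ s ∈ S, (k : H)⁻¹ * σ ((k : H) * s) ≠ s}.Finite ∧
    (∀ k : K, ∀ s ∈ S,
        (k : H)⁻¹ * (σ * τ) ((k : H) * s)
          = (k : H)⁻¹ * σ ((k : H) * ((k : H)⁻¹ * τ ((k : H) * s)))) ∧
    (∀ k : K, ∀ s ∈ S,
        (k : H)⁻¹ * (permAct H (k₀ : H) σ) ((k : H) * s)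
          = ((k₀⁻¹ * k : K) : H)⁻¹ * σ (((k₀⁻¹ * k : K) : H) * s)) := by
  refine ⟨fun k s hs => ?_, finite_setOf_exists_inv_mul_apply_mul_ne hS.injective hσfin,
    fun k s _ => ?_, fun k s _ => ?_⟩
  · exact inv_mul_apply_mul_mem_of_mapsTo (Set.mapsTo_iff_image_subset.2 (hσblocks k).subset) hs
  · rw [Equiv.Perm.mul_apply, mul_inv_cancel_left]
  · push_cast
    exact inv_mul_permAct_apply_mul _ _ σ s

open Pointwise in
/-- Let `K ≤ H` and let `S` be a set of coset representatives for `H/K`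
(so `(k,s) ↦ k·s` is a bijection `K × S → H`). For `σ ∈ FSym(H)` preserving
every block `kS`, define `f_σ(k) = (k⁻¹·σ)|_S`, i.e. `f_σ(k)(s) = k⁻¹ σ(k s)`.
Then: `f_σ(k)` maps `S` to `S`; (a) `f_σ` has finite support; (b)
`f_{σ∘τ}(k) = f_σ(k) ∘ f_τ(k)`; and (c) `f_{k₀·σ}(k) = f_σ(k₀⁻¹ k)`. -/
theorem stmt_18 (H : Type*) [Group H] (K : Subgroup H) (S : Set H)
    (hS : Function.Bijective (fun p : K × S => (p.1 : H) * (p.2 : H)))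
    (σ τ : Equiv.Perm H) (hσfin : σ ∈ fsym H) (hτfin : τ ∈ fsym H)
    (hσblocks : ∀ k : K, ⇑σ '' ((k : H) • S) = (k : H) • S)
    (hτblocks : ∀ k : K, ⇑τ '' ((k : H) • S) = (k : H) • S)
    (k₀ : K) :
    (∀ k : K, ∀ s ∈ S, (k : H)⁻¹ * σ ((k : H) * s) ∈ S) ∧
    {k : K | ∃ s ∈ S, (k : H)⁻¹ * σ ((k : H) * s) ≠ s}.Finite ∧
    (∀ k : K, ∀ s ∈ S,
        (k : H)⁻¹ * (σ * τ) ((k : H) * s)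
          = (k : H)⁻¹ * σ ((k : H) * ((k : H)⁻¹ * τ ((k : H) * s)))) ∧
    (∀ k : K, ∀ s ∈ S,
        (k : H)⁻¹ * (permAct H (k₀ : H) σ) ((k : H) * s)
          = ((k₀⁻¹ * k : K) : H)⁻¹ * σ (((k₀⁻¹ * k : K) : H) * s)) :=
  stmt_18_general H K S hS σ τ hσfin hσblocks k₀
end
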